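/- arXiv:2205.11624 — 2 statements merged into one kernel-verified Lean document; each statement's English description precedes it below -/
import Mathlib

section
/- Suppose w_h ≥ 1, w_so ≥ w_h, and let OPEN be a nonempty set of search nodes equipped with a cost function g : OPEN → ℝ and a heuristic function h : OPEN → ℝ. Suppose there exists a node n* ∈ OPEN with g(n*) ≥ 0, h(n*) ≥ 0, and g(n*) + h(n*) ≤ C* (where C* ≥ 0 is the optimal solution cost). Let F_best be a real number with F_best ≤ g(n) + w_h·h(n) for every n ∈ OPEN. If the returned goal node has cost c_goal satisfying c_goal ≤ (w_so / w_h)·F_best, then c_goal ≤ w_so·C*. (This is the WO-EECBS half of the paper's Lemma: the weighted-open variant with open priority g + w_h·h and focal bound w_f = w_so/w_h is w_so-suboptimal at the low level.) -/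
/-- WO-EECBS half of the paper's Lemma: the weighted-open variant with open
priority `g + w_h·h` and focal bound `w_f = w_so/w_h` is `w_so`-suboptimal
at the low level. -/
theorem wo_eecbs_suboptimal
    {α : Type*} (OPEN : Set α) (hOPEN : OPEN.Nonempty)
    (g h : α → ℝ) (w_h w_so C F_best c_goal : ℝ)
    (hwh : 1 ≤ w_h) (hwso : w_h ≤ w_so) (hC : 0 ≤ C)
    (nstar : α) (hmem : nstar ∈ OPEN)
    (hg : 0 ≤ g nstar) (hh : 0 ≤ h nstar)
    (hadm : g nstar + h nstar ≤ C)
    (hFbest : ∀ n ∈ OPEN, F_best ≤ g n + w_h * h n)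
    (hgoal : c_goal ≤ (w_so / w_h) * F_best) :
    c_goal ≤ w_so * C := by
  have hF := hFbest nstar hmem
  have hwh0 : (0:ℝ) < w_h := lt_of_lt_of_le one_pos hwh
  have h1 : F_best ≤ w_h * C := by nlinarith
  have h2 : (w_so / w_h) * F_best ≤ (w_so / w_h) * (w_h * C) := by
    apply mul_le_mul_of_nonneg_left h1
    have : (0:ℝ) ≤ w_so := le_trans (le_trans zero_le_one hwh) hwso
    exact div_nonneg this hwh0.le
  calc c_goal ≤ (w_so / w_h) * F_best := hgoal
    _ ≤ (w_so / w_h) * (w_h * C) := h2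
    _ = w_so * C := by
        field_simp
end

section
/- Suppose w_h ≥ 1 and let OPEN be a nonempty set of search nodes with cost function g : OPEN → ℝ and heuristic h : OPEN → ℝ. Suppose there exists a node n* ∈ OPEN with h(n*) ≥ 0 and g(n*) + h(n*) ≤ C*, where C* is a real number. Let F_best and g_min be real numbers satisfying F_best ≤ g(n) + w_h·h(n) for every n ∈ OPEN and g_min ≤ g(n) for every n ∈ OPEN. Then (F_best + (w_h − 1)·g_min) / w_h ≤ C*. (This is the validity of the improved lower bound on the optimal path cost used in the 'LB+' variant of WO-EECBS.) -/
/-- Validity of the improved lower bound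
`(F_best + (w_h − 1)·g_min)/w_h` on the optimal path cost used in the
'LB+' variant of WO-EECBS. -/
theorem wo_eecbs_improved_lower_bound
    {α : Type*} (OPEN : Set α) (hOPEN : OPEN.Nonempty)
    (g h : α → ℝ) (w_h C F_best g_min : ℝ)
    (hwh : 1 ≤ w_h)
    (nstar : α) (hmem : nstar ∈ OPEN)
    (hh : 0 ≤ h nstar)
    (hadm : g nstar + h nstar ≤ C)
    (hFbest : ∀ n ∈ OPEN, F_best ≤ g n + w_h * h n)
    (hgmin : ∀ n ∈ OPEN, g_min ≤ g n) :
    (F_best + (w_h - 1) * g_min) / w_h ≤ C := by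
  have h1 := hFbest nstar hmem
  have h2 := hgmin nstar hmem
  have hw : 0 < w_h := lt_of_lt_of_le one_pos hwh
  rw [div_le_iff₀ hw]
  nlinarith
end
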